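/- For any terminal-weighted unambiguous context-free grammar G_π, there exists a rule-weighted grammar G_λ generating the same language such that for every length n ≥ 0 and every word w of length n in the language, the induced probability p_{λ,n}(w) = λ(w)/∑_{u, |u|=n} λ(u) equals p_{π,n}(w) = π(w)/∑_{u, |u|=n} π(u). -/

import Mathlib

/-!
Give each rule `A → α` the product of the letter weights of the terminals in `α`. Every leaf of a
parse tree is a child of exactly one internal node, so the rule weight of a tree is the letter
weight of its yield. Keeping the grammar, both weightings then agree word by word, and so do the
normalized distributions.
-/

namespace WCFG

/-- A context-free grammar: a set of production rules `(A, rhs)` and a start symbol. -/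
structure CFG (T N : Type) where
  rules : Set (N × List (T ⊕ N))
  start : N

/-- Parse trees: leaves are terminal letters, internal nodes are labeled by a non-terminal. -/
inductive PT (T N : Type) : Type where
  | leaf (t : T) : PT T N
  | node (A : N) (children : List (PT T N)) : PT T N

/-- The symbol (terminal or non-terminal) at the root of a parse tree. -/
def PT.sym {T N : Type} : PT T N → T ⊕ N
  | .leaf t => .inl t
  | .node A _ => .inr A

mutual
/-- The yield (produced word) of a parse tree. -/
def PT.yield {T N : Type} : PT T N → List T
  | .leaf t => [t]
  | .node _ cs => PT.yieldF cs
def PT.yieldF {T N : Type} : List (PT T N) → List T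
  | [] => []
  | p :: ps => PT.yield p ++ PT.yieldF ps
end

mutual
/-- The weight of a parse tree: product of the weights of the rules used (with multiplicity). -/
def PT.weight {T N : Type} (wt : N × List (T ⊕ N) → ℝ) : PT T N → ℝ
  | .leaf _ => 1
  | .node A cs => wt (A, cs.map PT.sym) * PT.weightF wt cs
def PT.weightF {T N : Type} (wt : N × List (T ⊕ N) → ℝ) : List (PT T N) → ℝ
  | [] => 1
  | p :: ps => PT.weight wt p * PT.weightF wt ps
end

mutual
/-- Number of occurrences of a rule in a parse tree. -/
def PT.ruleCount {T N : Type} [DecidableEq N] [DecidableEq T]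
    (r : N × List (T ⊕ N)) : PT T N → ℕ
  | .leaf _ => 0
  | .node A cs => (if (A, cs.map PT.sym) = r then 1 else 0) + PT.ruleCountF r cs
def PT.ruleCountF {T N : Type} [DecidableEq N] [DecidableEq T]
    (r : N × List (T ⊕ N)) : List (PT T N) → ℕ
  | [] => 0
  | p :: ps => PT.ruleCount r p + PT.ruleCountF r ps
end

/-- Well-formedness of a parse tree w.r.t. a grammar. -/
inductive PT.wf {T N : Type} (G : CFG T N) : PT T N → Prop
  | leaf (t : T) : (PT.leaf t).wf G
  | node (A : N) (cs : List (PT T N)) (hr : (A, cs.map PT.sym) ∈ G.rules)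
      (hc : ∀ c ∈ cs, c.wf G) : (PT.node A cs).wf G

/-- The language generated by a grammar. -/
def CFG.lang {T N : Type} (G : CFG T N) : Set (List T) :=
  {w | ∃ p : PT T N, p.wf G ∧ p.sym = Sum.inr G.start ∧ p.yield = w}

/-- Unambiguity: any word has at most one parse tree from the axiom. -/
def CFG.Unambiguous {T N : Type} (G : CFG T N) : Prop :=
  ∀ p q : PT T N, p.wf G → q.wf G → p.sym = Sum.inr G.start → q.sym = Sum.inr G.start →
    p.yield = q.yield → p = q

/-- `wDeriv G wt X w c` : the word `w` derives from the sentential form `X`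
with total weight `c` (product over all rules used, with multiplicity). -/
def wDeriv {T N : Type} (G : CFG T N) (wt : N × List (T ⊕ N) → ℝ)
    (X : List (T ⊕ N)) (w : List T) (c : ℝ) : Prop :=
  ∃ ps : List (PT T N), (∀ p ∈ ps, p.wf G) ∧ ps.map PT.sym = X ∧
    PT.yieldF ps = w ∧ (ps.map (PT.weight wt)).prod = c

def symWeight {T N : Type} (π : T → ℝ) : T ⊕ N → ℝ :=
  Sum.elim π 1

def terminalRuleWeight {T N : Type} (π : T → ℝ) (r : N × List (T ⊕ N)) : ℝ :=
  (r.2.map (symWeight π)).prod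

theorem terminalRuleWeight_pos {T N : Type} {π : T → ℝ} (hπ : ∀ t, 0 < π t)
    (r : N × List (T ⊕ N)) : 0 < terminalRuleWeight π r := by
  refine List.prod_pos fun x hx => ?_
  obtain ⟨s, -, rfl⟩ := List.mem_map.mp hx
  cases s with
  | inl t => exact hπ t
  | inr _ => exact one_pos

mutual
theorem PT.weight_terminalRuleWeight_mul_symWeight {T N : Type} (π : T → ℝ) :
    ∀ p : PT T N, p.weight (terminalRuleWeight π) * symWeight π p.sym = (p.yield.map π).prod
  | .leaf t => by simp [PT.weight, PT.yield, PT.sym, symWeight]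
  | .node A cs => by
    rw [PT.yield, ← PT.weightF_terminalRuleWeight_mul_prod_symWeight π cs]
    simp only [PT.weight, PT.sym, symWeight, terminalRuleWeight, Sum.elim_inr, Pi.one_apply,
      mul_one]
    ring

theorem PT.weightF_terminalRuleWeight_mul_prod_symWeight {T N : Type} (π : T → ℝ) :
    ∀ ps : List (PT T N), PT.weightF (terminalRuleWeight π) ps *
      ((ps.map PT.sym).map (symWeight π)).prod = ((PT.yieldF ps).map π).prod
  | [] => by simp [PT.weightF, PT.yieldF]
  | p :: ps => by
    rw [PT.yieldF, List.map_append, List.prod_append,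
      ← PT.weight_terminalRuleWeight_mul_symWeight π p,
      ← PT.weightF_terminalRuleWeight_mul_prod_symWeight π ps]
    simp only [PT.weightF, List.map_cons, List.prod_cons]
    ring
end

theorem PT.weight_terminalRuleWeight_of_sym_eq_inr {T N : Type} (π : T → ℝ) {p : PT T N}
    {A : N} (hA : p.sym = Sum.inr A) :
    p.weight (terminalRuleWeight π) = (p.yield.map π).prod := by
  simpa [hA, symWeight] using PT.weight_terminalRuleWeight_mul_symWeight π p

/-- For any terminal-weighted unambiguous CFG `G` with positive letter
weights `π`, there is a rule-weighted (unambiguous) grammar `G'` with the same language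
whose induced length-`n` probability distribution coincides with the one induced by `π`,
for every `n` and every word of length `n` of the language. -/
theorem terminal_weighted_simulated_by_rule_weighted {T N : Type}
    (G : CFG T N) (hU : G.Unambiguous)
    (π : T → ℝ) (hπ : ∀ t, 0 < π t) :
    ∃ (N' : Type) (G' : CFG T N') (wt : N' × List (T ⊕ N') → ℝ) (lw : List T → ℝ),
      G'.Unambiguous ∧ (∀ r ∈ G'.rules, 0 < wt r) ∧ G'.lang = G.lang ∧
      (∀ (w : List T) (p : PT T N'), p.wf G' → p.sym = Sum.inr G'.start → p.yield = w →
        p.weight wt = lw w) ∧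
      ∀ n : ℕ, ∀ w ∈ G.lang, w.length = n →
        lw w / (∑' u : {u : List T // u ∈ G.lang ∧ u.length = n}, lw u.1)
          = (w.map π).prod /
            (∑' u : {u : List T // u ∈ G.lang ∧ u.length = n}, ((u.1.map π).prod)) := by
  refine ⟨N, G, terminalRuleWeight π, fun w => (w.map π).prod, hU,
    fun r _ => terminalRuleWeight_pos hπ r, rfl, ?_, fun _ _ _ _ => rfl⟩
  rintro w p - hroot rfl
  exact PT.weight_terminalRuleWeight_of_sym_eq_inr π hroot

end WCFG
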